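/- arXiv:2601.15183 — 2 statements merged into one kernel-verified Lean document; each statement's English description precedes it below -/
import Mathlib

section
/- For all integers t ≥ 2 and ℓ ≥ 2, the multicolor Ramsey number satisfies r(t;ℓ) ≥ c_{t,t}^{-(ℓ-2)/t} · 2^{(t-1)/2}, where c_{t,t} is the infimum over K_t-free graphs G of the probability that t i.i.d. uniform random vertices of G (with repetition allowed) form an independent set. -/
open Filter

/-- Probability that `t` i.i.d. uniform vertices of `G` (with repetition) form an independent
set: the fraction of functions `Fin t → V` whose image is independent in `G`. -/
noncomputable def indepProb (t : ℕ) {V : Type} [Fintype V] (G : SimpleGraph V) : ℝ :=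
  (Nat.card {f : Fin t → V // ∀ i j, ¬ G.Adj (f i) (f j)} : ℝ) / (Fintype.card V : ℝ) ^ t

/-- `c_{t,t}`: the infimum over all (nonempty, finite) `K_t`-free graphs of the probability that
`t` i.i.d. uniform vertices form an independent set. -/
noncomputable def cParam (t : ℕ) : ℝ :=
  sInf { q : ℝ | ∃ M : ℕ, 0 < M ∧ ∃ G : SimpleGraph (Fin M), G.CliqueFree t ∧ q = indepProb t G }

/-- Every `ℓ`-coloring of the edges of `K_N` has a monochromatic `K_t`. -/
def ramseyProp (N t ℓ : ℕ) : Prop :=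
  ∀ c : Sym2 (Fin N) → Fin ℓ, ∃ i : Fin ℓ, ∃ S : Finset (Fin N), S.card = t ∧
    ∀ x ∈ S, ∀ y ∈ S, x ≠ y → c s(x, y) = i

/-- The multicolor Ramsey number `r(t; ℓ)`. -/
noncomputable def multiRamsey (t ℓ : ℕ) : ℕ := sInf {N | ramseyProp N t ℓ}

/-!
Let `N = r(t; k + 2)` and let `G` be a `K_t`-free graph. Colour `K_N` at random: take `k`
independent uniform maps `φ j : [N] → V(G)` and a uniform red/blue colouring `ψ`, and give an
edge colour `j` if `φ j` maps it onto an edge of `G`, and its `ψ`-colour otherwise. As `G` is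
`K_t`-free, no colour `j < k` contains a `K_t`, so the Ramsey property yields a `t`-set that every
`φ j` maps to an independent set and that `ψ` colours monochromatically. A fixed `t`-set does so
with probability `2 p^k 2^(-C(t,2))`, `p = indepProb t G`; the union bound over the `C(N,t)`
sets gives `2^C(t,2) ≤ 2 C(N,t) p^k ≤ N^t p^k`. Infimum over `G` and a `t`-th root finish.
-/

open Function Finset

theorem exists_seq_color_eq {W C : Type*} [DecidableEq W] [Fintype C] [DecidableEq C]
    [Nonempty C] (c : Sym2 W → C) :
    ∀ (m : ℕ) (A : Finset W), (Fintype.card C + 1) ^ m ≤ #A →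
      ∃ (x : Fin m → W) (f : Fin m → C), (∀ i, x i ∈ A) ∧
        ∀ i j, i < j → x i ≠ x j ∧ c s(x i, x j) = f i
  | 0, _, _ => ⟨Fin.elim0, Fin.elim0, (·.elim0), fun i => i.elim0⟩
  | m + 1, A, hA => by
    obtain ⟨a, ha⟩ : A.Nonempty := card_pos.mp (lt_of_lt_of_le (by positivity) hA)
    have hB : #(univ : Finset C) * (Fintype.card C + 1) ^ m ≤ #(A.erase a) := by
      have : 1 ≤ (Fintype.card C + 1) ^ m := Nat.one_le_pow _ _ (by omega)
      rw [card_erase_of_mem ha, card_univ, mul_comm]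
      rw [pow_succ, mul_add_one] at hA
      omega
    obtain ⟨i₀, -, hfib⟩ := exists_le_card_fiber_of_mul_le_card_of_maps_to
      (f := fun v => c s(a, v)) (fun _ _ => mem_univ _) univ_nonempty hB
    obtain ⟨x, f, hxA, hx⟩ := exists_seq_color_eq c m _ hfib
    have hxa (i : Fin m) : x i ∈ A ∧ x i ≠ a ∧ c s(a, x i) = i₀ := by
      have := hxA i
      simp only [mem_filter, mem_erase] at this
      exact ⟨this.1.2, this.1.1, this.2⟩
    refine ⟨Fin.cons a x, Fin.cons i₀ f, Fin.cases ha fun i => (hxa i).1, fun i j hij => ?_⟩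
    cases j using Fin.cases with
    | zero => exact absurd hij (Fin.not_lt_zero i)
    | succ j =>
      cases i using Fin.cases with
      | zero => exact ⟨(hxa j).2.1.symm, (hxa j).2.2⟩
      | succ i => simpa using hx i j (Fin.succ_lt_succ_iff.mp hij)

theorem ramseyProp_pow (t ℓ : ℕ) (hℓ : 0 < ℓ) :
    ramseyProp ((ℓ + 1) ^ (ℓ * (t - 1) + 1)) t ℓ := by
  intro c
  have : Nonempty (Fin ℓ) := ⟨⟨0, hℓ⟩⟩
  obtain ⟨x, f, -, hx⟩ := exists_seq_color_eq c (ℓ * (t - 1) + 1) univ (by simp)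
  have hxinj : Injective x := fun i j h => by
    by_contra hne
    rcases lt_or_gt_of_ne hne with hlt | hlt
    exacts [(hx i j hlt).1 h, (hx j i hlt).1 h.symm]
  obtain ⟨i₀, hfib⟩ := Fintype.exists_lt_card_fiber_of_mul_lt_card f (n := t - 1) (by simp)
  obtain ⟨T, hT, hTcard⟩ := exists_subset_card_eq (show t ≤ #{x | f x = i₀} by omega)
  refine ⟨i₀, T.map ⟨x, hxinj⟩, by rw [card_map, hTcard], ?_⟩
  simp only [Finset.mem_map, Embedding.coeFn_mk]
  rintro _ ⟨p, hp, rfl⟩ _ ⟨q, hq, rfl⟩ hpq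
  have hfp : f p = i₀ := (mem_filter.mp (hT hp)).2
  have hfq : f q = i₀ := (mem_filter.mp (hT hq)).2
  rcases lt_or_gt_of_ne (ne_of_apply_ne x hpq) with hlt | hlt
  · rw [(hx p q hlt).2, hfp]
  · rw [Sym2.eq_swap, (hx q p hlt).2, hfq]

theorem ramseyProp.exists_mono {N t ℓ : ℕ} (h : ramseyProp N t ℓ) {C : Type*} [Fintype C]
    (hC : Fintype.card C = ℓ) (c : Sym2 (Fin N) → C) :
    ∃ i : C, ∃ S : Finset (Fin N), #S = t ∧
      ∀ x ∈ S, ∀ y ∈ S, x ≠ y → c s(x, y) = i := by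
  let e := Fintype.equivFinOfCardEq hC
  obtain ⟨i, S, hS, hmono⟩ := h (e ∘ c)
  exact ⟨e.symm i, S, hS, fun x hx y hy hxy => e.eq_symm_apply.mpr (hmono x hx y hy hxy)⟩

theorem two_mul_choose_le_pow {t : ℕ} (ht : 2 ≤ t) (N : ℕ) : 2 * N.choose t ≤ N ^ t :=
  calc 2 * N.choose t ≤ t.factorial * N.choose t := Nat.mul_le_mul_right _ (Nat.factorial_le ht)
    _ = N.descFactorial t := (Nat.descFactorial_eq_factorial_mul_choose N t).symm
    _ ≤ N ^ t := Nat.descFactorial_le_pow N t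

theorem card_subtype_comp_injective_mul {α β γ : Type*} [Fintype α] [Fintype β] [Fintype γ]
    {g : α → β} (hg : Injective g) (P : (α → γ) → Prop) :
    Nat.card {f : β → γ // P (f ∘ g)} * Fintype.card γ ^ Fintype.card α =
      Nat.card {h : α → γ // P h} * Fintype.card γ ^ Fintype.card β := by
  classical
  let e : (β → γ) ≃ (α → γ) × ({b // b ∉ Set.range g} → γ) :=
    (Equiv.piEquivPiSubtypeProd (· ∈ Set.range g) fun _ => γ).trans
      ((Equiv.arrowCongr (Equiv.ofInjective g hg).symm (Equiv.refl γ)).prodCongr (Equiv.refl _))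
  have hsplit : {f : β → γ // P (f ∘ g)} ≃
      {h : α → γ // P h} × ({b // b ∉ Set.range g} → γ) :=
    (e.subtypeEquiv (q := fun p => P p.1) fun _ => Iff.rfl).trans
      Equiv.prodSubtypeFstEquivSubtypeProd
  rw [Nat.card_congr hsplit, Nat.card_prod, Nat.card_fun]
  simp only [Nat.card_eq_fintype_card]
  rw [Fintype.card_subtype_compl, Set.card_range_of_injective hg, mul_assoc, ← pow_add,
    Nat.sub_add_cancel (Fintype.card_le_of_injective g hg)]

theorem card_subtype_forall_comp_injective_mul {W V : Type*} [Fintype W] [Fintype V] {t : ℕ}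
    {g : Fin t → W} (hg : Injective g) (k : ℕ) (P : (Fin t → V) → Prop) :
    Nat.card {φ : Fin k → W → V // ∀ j, P (φ j ∘ g)} * (Fintype.card V ^ t) ^ k =
      (Nat.card {h : Fin t → V // P h} * Fintype.card V ^ Fintype.card W) ^ k := by
  rw [Nat.card_congr (Equiv.subtypePiEquivPi (p := fun _ f => P (f ∘ g))), Nat.card_pi,
    prod_const, card_univ, Fintype.card_fin, ← mul_pow,
    ← card_subtype_comp_injective_mul hg, Fintype.card_fin]

theorem card_const_on_edges_mul {W : Type*} [Fintype W] {t : ℕ} {g : Fin t → W}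
    (hg : Injective g) (b : Bool) :
    Nat.card {ψ : Sym2 W → Bool // ∀ i i', i ≠ i' → ψ s(g i, g i') = b} * 2 ^ t.choose 2 =
      2 ^ Fintype.card (Sym2 W) := by
  let e : {p : Sym2 (Fin t) // ¬p.IsDiag} → Sym2 W := fun p => p.1.map g
  have he : Injective e := (Sym2.map.injective hg).comp Subtype.val_injective
  have hiff (ψ : Sym2 W → Bool) :
      (∀ i i', i ≠ i' → ψ s(g i, g i') = b) ↔ ∀ p, (ψ ∘ e) p = b := by
    refine ⟨fun h => ?_, fun h i i' hii' => h ⟨s(i, i'), by simpa using hii'⟩⟩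
    rintro ⟨p, hp⟩
    induction p using Sym2.ind
    exact h _ _ (by simpa using hp)
  have hconst : Nat.card {h : {p : Sym2 (Fin t) // ¬p.IsDiag} → Bool // ∀ p, h p = b} = 1 :=
    Nat.card_eq_one_iff_unique.mpr
      ⟨⟨fun h h' => Subtype.ext (funext fun p => (h.2 p).trans (h'.2 p).symm)⟩,
        ⟨⟨fun _ => b, fun _ => rfl⟩⟩⟩
  have := card_subtype_comp_injective_mul he (fun h => ∀ p, h p = b)
  rw [Sym2.card_subtype_not_diag, Fintype.card_fin, Fintype.card_bool] at this
  rw [Nat.card_congr (Equiv.subtypeEquivRight hiff), this, hconst, one_mul]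

theorem card_le_sum_card_of_forall_exists {Ω ι : Type*} [Finite Ω] [Fintype ι]
    (P : ι → Ω → Prop) (h : ∀ ω, ∃ i, P i ω) :
    Nat.card Ω ≤ ∑ i, Nat.card {ω // P i ω} := by
  classical
  have := Fintype.ofFinite Ω
  simp only [Nat.card_eq_fintype_card, Fintype.card_subtype]
  calc Fintype.card Ω = #(univ : Finset Ω) := rfl
    _ ≤ #(univ.biUnion fun i => ({ω | P i ω} : Finset Ω)) :=
        card_le_card fun ω _ => by simpa using h ω
    _ ≤ _ := card_biUnion_le

theorem SimpleGraph.CliqueFree.comap_of_fun {α β : Type*} {G : SimpleGraph β} {n : ℕ}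
    (h : G.CliqueFree n) (f : α → β) : (G.comap f).CliqueFree n := by
  classical
  intro s hs
  have hinj : Set.InjOn f s := fun x hx y hy hxy => by
    by_contra hne
    have hadj := hs.isClique hx hy hne
    rw [SimpleGraph.comap_adj, hxy] at hadj
    exact G.irrefl hadj
  refine h (s.image f) ⟨?_, by rw [card_image_of_injOn hinj, hs.card_eq]⟩
  rw [coe_image]
  rintro _ ⟨x, hx, rfl⟩ _ ⟨y, hy, rfl⟩ hxy
  exact hs.isClique hx hy (ne_of_apply_ne f hxy)

section PullbackColoring

variable {V W : Type*} {k : ℕ} (G : SimpleGraph V) (φ : Fin k → W → V) (ψ : Sym2 W → Bool)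

open scoped Classical in
noncomputable def pullbackColoring (p : Sym2 W) : Fin k ⊕ Bool :=
  if h : ∃ j, p ∈ (G.comap (φ j)).edgeSet then .inl h.choose else .inr (ψ p)

variable {G φ ψ}

theorem mem_edgeSet_of_pullbackColoring_eq_inl {p : Sym2 W} {j : Fin k}
    (h : pullbackColoring G φ ψ p = .inl j) : p ∈ (G.comap (φ j)).edgeSet := by
  unfold pullbackColoring at h
  split_ifs at h with hp
  cases h
  exact hp.choose_spec

theorem pullbackColoring_eq_inr {p : Sym2 W} {b : Bool} (h : pullbackColoring G φ ψ p = .inr b) :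
    (∀ j, p ∉ (G.comap (φ j)).edgeSet) ∧ ψ p = b := by
  unfold pullbackColoring at h
  split_ifs at h with hp
  cases h
  exact ⟨not_exists.mp hp, rfl⟩

end PullbackColoring

def IsIndepMono {V W : Type*} {k t : ℕ} (G : SimpleGraph V) (φ : Fin k → W → V)
    (ψ : Sym2 W → Bool) (g : Fin t → W) (b : Bool) : Prop :=
  (∀ j i i', ¬ G.Adj (φ j (g i)) (φ j (g i'))) ∧ ∀ i i', i ≠ i' → ψ s(g i, g i') = b

theorem exists_isIndepMono {V : Type*} {N t k : ℕ} {G : SimpleGraph V} (hG : G.CliqueFree t)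
    (hN : ramseyProp N t (k + 2)) (φ : Fin k → Fin N → V) (ψ : Sym2 (Fin N) → Bool) :
    ∃ (g : Fin t ↪o Fin N) (b : Bool), IsIndepMono G φ ψ g b := by
  obtain ⟨c, S, hS, hmono⟩ := hN.exists_mono (by simp) (pullbackColoring G φ ψ)
  cases c with
  | inl j =>
    refine absurd ⟨fun x hx y hy hxy => ?_, hS⟩ (hG.comap_of_fun (φ j) S)
    exact mem_edgeSet_of_pullbackColoring_eq_inl (hmono x hx y hy hxy)
  | inr b =>
    set g := S.orderEmbOfFin hS
    have hg : ∀ i, g i ∈ S := S.orderEmbOfFin_mem hS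
    refine ⟨g, b, fun j i i' => ?_, fun i i' hii' => ?_⟩
    · by_cases h : g i = g i'
      · rw [h]
        exact G.irrefl
      · exact (pullbackColoring_eq_inr (hmono _ (hg i) _ (hg i') h)).1 j
    · exact (pullbackColoring_eq_inr (hmono _ (hg i) _ (hg i') (g.injective.ne hii'))).2

theorem indepProb_nonneg (t : ℕ) {V : Type} [Fintype V] (G : SimpleGraph V) :
    0 ≤ indepProb t G := by
  unfold indepProb
  positivity

theorem card_isIndepMono {V W : Type} [Fintype V] [Nonempty V] [Fintype W] {k t : ℕ}
    (G : SimpleGraph V) {g : Fin t → W} (hg : Injective g) (b : Bool) :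
    (Nat.card {ω : (Fin k → W → V) × (Sym2 W → Bool) // IsIndepMono G ω.1 ω.2 g b} :
      ℝ) =
      Nat.card ((Fin k → W → V) × (Sym2 W → Bool)) * indepProb t G ^ k / 2 ^ t.choose 2 := by
  have hsplit :
      Nat.card {ω : (Fin k → W → V) × (Sym2 W → Bool) // IsIndepMono G ω.1 ω.2 g b} =
      Nat.card {φ : Fin k → W → V // ∀ j i i', ¬ G.Adj (φ j (g i)) (φ j (g i'))} *
        Nat.card {ψ : Sym2 W → Bool // ∀ i i', i ≠ i' → ψ s(g i, g i') = b} := by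
    rw [← Nat.card_prod]
    exact Nat.card_congr (Equiv.subtypeProdEquivProd
      (p := fun φ : Fin k → W → V => ∀ j i i', ¬ G.Adj (φ j (g i)) (φ j (g i')))
      (q := fun ψ : Sym2 W → Bool => ∀ i i', i ≠ i' → ψ s(g i, g i') = b))
  have hφ := card_subtype_forall_comp_injective_mul (V := V) hg k
    (fun h => ∀ i i', ¬ G.Adj (h i) (h i'))
  simp only [comp_apply] at hφ
  have hcount :
      Nat.card {ω : (Fin k → W → V) × (Sym2 W → Bool) // IsIndepMono G ω.1 ω.2 g b} *
      ((Fintype.card V ^ t) ^ k * 2 ^ t.choose 2) =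
      Nat.card ((Fin k → W → V) × (Sym2 W → Bool)) *
        Nat.card {h : Fin t → V // ∀ i i', ¬ G.Adj (h i) (h i')} ^ k := by
    rw [hsplit, mul_mul_mul_comm, hφ, card_const_on_edges_mul hg b, Nat.card_prod, Nat.card_fun,
      Nat.card_fun, Nat.card_fun, Nat.card_fin]
    simp only [Nat.card_eq_fintype_card, Fintype.card_bool]
    ring
  have hV : (0 : ℝ) < Fintype.card V := by exact_mod_cast Fintype.card_pos
  rw [indepProb, div_pow, mul_div_assoc', div_div, eq_div_iff (by positivity)]
  exact_mod_cast hcount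

theorem two_pow_choose_le_mul_indepProb_pow {V : Type} [Fintype V] [Nonempty V] {N t k : ℕ}
    (ht : 2 ≤ t) {G : SimpleGraph V} (hG : G.CliqueFree t) (hN : ramseyProp N t (k + 2)) :
    (2 : ℝ) ^ t.choose 2 ≤ N ^ t * indepProb t G ^ k := by
  let Ω := (Fin k → Fin N → V) × (Sym2 (Fin N) → Bool)
  have : Fintype (Fin t ↪o Fin N) := Fintype.ofEquiv _ Set.powersetCard.ofFinEmbEquiv.symm
  have hcover := card_le_sum_card_of_forall_exists
    (fun (gb : (Fin t ↪o Fin N) × Bool) (ω : Ω) => IsIndepMono G ω.1 ω.2 gb.1 gb.2)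
    fun ω => by simpa using exists_isIndepMono hG hN ω.1 ω.2
  have hindex : Fintype.card ((Fin t ↪o Fin N) × Bool) = 2 * N.choose t := by
    rw [Fintype.card_prod, Fintype.card_bool, Fintype.card_eq_nat_card,
      Nat.card_congr Set.powersetCard.ofFinEmbEquiv, Set.powersetCard.card, Nat.card_fin, mul_comm]
  have hterm (gb : (Fin t ↪o Fin N) × Bool) :
      (Nat.card {ω : Ω // IsIndepMono G ω.1 ω.2 gb.1 gb.2} : ℝ) =
        Nat.card Ω * indepProb t G ^ k / 2 ^ t.choose 2 :=
    card_isIndepMono G gb.1.injective gb.2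
  replace hcover := (Nat.cast_le (α := ℝ)).mpr hcover
  rw [Nat.cast_sum, sum_congr rfl fun gb _ => hterm gb, sum_const, card_univ, hindex,
    nsmul_eq_mul, mul_div_assoc', le_div_iff₀ (by positivity)] at hcover
  have hΩ : (0 : ℝ) < Nat.card Ω := by exact_mod_cast Nat.card_pos
  have hchoose : (2 * N.choose t : ℝ) ≤ N ^ t := by exact_mod_cast two_mul_choose_le_pow ht N
  calc (2 : ℝ) ^ t.choose 2 ≤ 2 * N.choose t * indepProb t G ^ k :=
        le_of_mul_le_mul_left (by push_cast at hcover; linarith) hΩ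
    _ ≤ N ^ t * indepProb t G ^ k :=
        mul_le_mul_of_nonneg_right hchoose (pow_nonneg (indepProb_nonneg t G) k)
theorem rpow_div_le_sInf {S : Set ℝ} {x : ℝ} {k t : ℕ} (hS : S.Nonempty) (hx : 0 ≤ x)
    (hk : k ≠ 0) (h : ∀ q ∈ S, 0 ≤ q ∧ x ^ t ≤ q ^ k) :
    x ^ ((t : ℝ) / k) ≤ sInf S := by
  refine le_csInf hS fun q hq => ?_
  obtain ⟨hq, hxq⟩ := h q hq
  calc x ^ ((t : ℝ) / k) = (x ^ t) ^ ((k : ℝ)⁻¹) := by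
        rw [← Real.rpow_natCast, ← Real.rpow_mul hx, div_eq_mul_inv]
    _ ≤ (q ^ k) ^ ((k : ℝ)⁻¹) := by gcongr
    _ = q := Real.pow_rpow_inv_natCast hq hk

theorem sInf_rpow_neg_div_mul_le {S : Set ℝ} {a n : ℝ} {k t : ℕ} (hS : S.Nonempty)
    (ha : 0 < a) (hn : 0 ≤ n) (ht : t ≠ 0)
    (h : ∀ q ∈ S, 0 ≤ q ∧ a ^ t ≤ n ^ t * q ^ k) :
    sInf S ^ (-(k : ℝ) / t) * a ≤ n := by
  obtain ⟨q₀, hq₀⟩ := hS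
  have hn_pos : 0 < n := by
    refine hn.lt_of_ne fun hn0 => ?_
    have := (h q₀ hq₀).2
    rw [← hn0, zero_pow ht, zero_mul] at this
    exact (pow_pos ha t).not_ge this
  set x := a / n
  have hx : 0 < x := div_pos ha hn_pos
  have hxS : ∀ q ∈ S, 0 ≤ q ∧ x ^ t ≤ q ^ k := fun q hq =>
    ⟨(h q hq).1, by rw [div_pow, div_le_iff₀ (by positivity), mul_comm]; exact (h q hq).2⟩
  suffices sInf S ^ (-(k : ℝ) / t) ≤ x⁻¹ by
    calc sInf S ^ (-(k : ℝ) / t) * a ≤ x⁻¹ * a := mul_le_mul_of_nonneg_right this ha.le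
      _ = n := by rw [show x = a / n from rfl, inv_div, div_mul_cancel₀ _ ha.ne']
  rcases Nat.eq_zero_or_pos k with rfl | hk
  · have hx1 : x ≤ 1 :=
      (pow_le_one_iff_of_nonneg hx.le ht).mp (by simpa using (hxS q₀ hq₀).2)
    simpa using one_le_inv₀ hx |>.mpr hx1
  · calc sInf S ^ (-(k : ℝ) / t) ≤ (x ^ ((t : ℝ) / k)) ^ (-(k : ℝ) / t) :=
          Real.rpow_le_rpow_of_nonpos (by positivity)
            (rpow_div_le_sInf ⟨q₀, hq₀⟩ hx.le hk.ne' hxS)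
            (div_nonpos_of_nonpos_of_nonneg (by simp) (by positivity))
      _ = x⁻¹ := by
        rw [← Real.rpow_mul hx.le, ← Real.rpow_neg_one]
        congr 1
        field_simp

theorem two_rpow_pow_eq (t : ℕ) : ((2 : ℝ) ^ (((t : ℝ) - 1) / 2)) ^ t = 2 ^ t.choose 2 := by
  rw [← Real.rpow_natCast, ← Real.rpow_mul zero_le_two, ← Real.rpow_natCast 2 (t.choose 2),
    Nat.cast_choose_two]
  ring_nf

/-- Sawin's reduction: `r(t;ℓ) ≥ c_{t,t}^{-(ℓ-2)/t} · 2^{(t-1)/2}`. -/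
theorem sawin_reduction (t ℓ : ℕ) (ht : 2 ≤ t) (hℓ : 2 ≤ ℓ) :
    cParam t ^ (-((ℓ : ℝ) - 2) / (t : ℝ)) * (2 : ℝ) ^ (((t : ℝ) - 1) / 2)
      ≤ (multiRamsey t ℓ : ℝ) := by
  obtain ⟨k, rfl⟩ : ∃ k, ℓ = k + 2 := ⟨ℓ - 2, by omega⟩
  have hN : ramseyProp (multiRamsey t (k + 2)) t (k + 2) :=
    Nat.sInf_mem (s := {N | ramseyProp N t (k + 2)}) ⟨_, ramseyProp_pow t (k + 2) (by omega)⟩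
  have hexp : -(((k + 2 : ℕ) : ℝ) - 2) / t = -(k : ℝ) / t := by push_cast; ring
  rw [hexp]
  refine sInf_rpow_neg_div_mul_le ⟨_, 1, one_pos, ⊥, SimpleGraph.cliqueFree_bot ht, rfl⟩
    (by positivity) (Nat.cast_nonneg _) (by omega) ?_
  rintro q ⟨M, hM, G, hG, rfl⟩
  have : Nonempty (Fin M) := ⟨⟨0, hM⟩⟩
  rw [two_rpow_pow_eq]
  exact ⟨indepProb_nonneg t G, two_pow_choose_le_mul_indepProb_pow ht hG hN⟩
end

section
/- For every p with 0.42 < p < 0.5, the quantity g(p) = (1 - (log p)/(2 log(1-p)))·(1/p³) - ((log p)³/(8 (log(1-p))³))·(1/(1-p)³) is strictly positive. -/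
open Finset

lemma log_one_sub_lb {x L : ℝ} (h0 : 0 ≤ x) (h1 : x < 1) (n : ℕ)
    (h : L < -(∑ i ∈ range n, x ^ (i + 1) / (i + 1)) - x ^ (n + 1) / (1 - x)) :
    L < Real.log (1 - x) := by
  have H := Real.abs_log_sub_add_sum_range_le (x := x) (by rw [abs_of_nonneg h0]; exact h1) n
  rw [abs_of_nonneg h0, abs_le] at H
  linarith [H.1]

lemma log_one_sub_ub {x M : ℝ} (h0 : 0 ≤ x) (h1 : x < 1) (n : ℕ)
    (h : -(∑ i ∈ range n, x ^ (i + 1) / (i + 1)) + x ^ (n + 1) / (1 - x) < M) :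
    Real.log (1 - x) < M := by
  have H := Real.abs_log_sub_add_sum_range_le (x := x) (by rw [abs_of_nonneg h0]; exact h1) n
  rw [abs_of_nonneg h0, abs_le] at H
  linarith [H.2]

lemma step (p b L M : ℝ) (hp0 : 0 < p) (hp1 : p < 1) (hpb : p ≤ b) (hb1 : b < 1)
    (hL : L < Real.log p) (hM : Real.log (1 - p) < M) (hM0 : M < 0)
    (hkey : 0 < 4 * M ^ 2 * (L - 2 * M) * (1 - b) ^ 3 + L ^ 3 * b ^ 3) :
    0 < (1 - Real.log p / (2 * Real.log (1 - p))) * (1 / p ^ 3)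
        - ((Real.log p) ^ 3 / (8 * (Real.log (1 - p)) ^ 3)) * (1 / (1 - p) ^ 3) := by
  set lp := Real.log p with hlp
  set lq := Real.log (1 - p) with hlq
  have hq0 : 0 < 1 - p := by linarith
  have hlp0 : lp < 0 := Real.log_neg hp0 hp1
  have hlq0 : lq < 0 := Real.log_neg hq0 (by linarith)
  have hL0 : L < 0 := lt_trans hL hlp0
  have hb0 : 0 < b := lt_of_lt_of_le hp0 hpb
  have hb3 : (0:ℝ) < (1 - b) ^ 3 := pow_pos (by linarith) 3
  have hM2 : (0:ℝ) < M ^ 2 := by have := mul_pos_of_neg_of_neg hM0 hM0; nlinarith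
  have hLb3 : L ^ 3 * b ^ 3 < 0 :=
    mul_neg_of_neg_of_pos (Odd.pow_neg (by decide) hL0) (pow_pos hb0 3)
  have h2' : 0 < L - 2 * M := by nlinarith [mul_pos hM2 hb3, hLb3]
  have h1 : M ^ 2 ≤ lq ^ 2 := by nlinarith
  have h2 : L - 2 * M ≤ lp - 2 * lq := by linarith
  have c1 : M ^ 2 * (L - 2 * M) ≤ lq ^ 2 * (lp - 2 * lq) :=
    mul_le_mul h1 h2 h2'.le (sq_nonneg lq)
  have h3 : (1 - b) ^ 3 ≤ (1 - p) ^ 3 := pow_le_pow_left₀ (by linarith) (by linarith) 3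
  have c2 : M ^ 2 * (L - 2 * M) * (1 - b) ^ 3 ≤ lq ^ 2 * (lp - 2 * lq) * (1 - p) ^ 3 :=
    mul_le_mul c1 h3 hb3.le (le_trans (mul_nonneg hM2.le h2'.le) c1)
  have hlp3 : L ^ 3 ≤ lp ^ 3 := by nlinarith [sq_nonneg (lp + L), sq_nonneg (lp - L)]
  have hpb3 : p ^ 3 ≤ b ^ 3 := pow_le_pow_left₀ hp0.le hpb 3
  have d1 : lp ^ 3 * b ^ 3 ≤ lp ^ 3 * p ^ 3 :=
    mul_le_mul_of_nonpos_left hpb3 (le_of_lt (Odd.pow_neg (by decide) hlp0))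
  have d2 : L ^ 3 * b ^ 3 ≤ lp ^ 3 * b ^ 3 :=
    mul_le_mul_of_nonneg_right hlp3 (pow_pos hb0 3).le
  have c3 : L ^ 3 * b ^ 3 ≤ lp ^ 3 * p ^ 3 := d2.trans d1
  have hK : 0 < 4 * lq ^ 2 * (lp - 2 * lq) * (1 - p) ^ 3 + lp ^ 3 * p ^ 3 := by nlinarith
  have hv : 0 < -lq := by linarith
  have hlqne : lq ≠ 0 := ne_of_lt hlq0
  have hpne : p ≠ 0 := ne_of_gt hp0
  have hqne : (1 - p) ≠ 0 := ne_of_gt hq0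
  have hE : (1 - lp / (2 * lq)) * (1 / p ^ 3) - (lp ^ 3 / (8 * lq ^ 3)) * (1 / (1 - p) ^ 3)
      = (4 * lq ^ 2 * (lp - 2 * lq) * (1 - p) ^ 3 + lp ^ 3 * p ^ 3)
        / (8 * (-lq) ^ 3 * p ^ 3 * (1 - p) ^ 3) := by
    field_simp
    ring
  rw [hE]
  exact div_pos hK (by positivity)

set_option maxHeartbeats 2000000 in
/-- For every `p` with `0.42 < p < 0.5`, the quantity
`g(p) = (1 - log p/(2 log(1-p)))·p⁻³ - (log p)³/(8(log(1-p))³)·(1-p)⁻³` is strictly positive. -/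
theorem gain_positive (p : ℝ) (h1 : 0.42 < p) (h2 : p < 0.5) :
    0 < (1 - Real.log p / (2 * Real.log (1 - p))) * (1 / p ^ 3)
        - ((Real.log p) ^ 3 / (8 * (Real.log (1 - p)) ^ 3)) * (1 / (1 - p) ^ 3) := by
  rcases le_or_gt p (169/400) with hpb | hpb
  · have hla := log_one_sub_lb (x := 29/50) (L := (-21693/25000)) (by norm_num) (by norm_num) 16
        (by norm_num [Finset.sum_range_succ])
    have hla' : Real.log (1 - 29/50 : ℝ) ≤ Real.log p :=
        Real.log_le_log (by norm_num) (by linarith)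
    have hmb := log_one_sub_ub (x := 21/50) (M := (-6809/12500)) (by norm_num) (by norm_num) 16
        (by norm_num [Finset.sum_range_succ])
    have hmb' : Real.log (1 - p) ≤ Real.log (1 - 21/50 : ℝ) :=
        Real.log_le_log (by linarith) (by linarith)
    exact step p (169/400) (-21693/25000) (-6809/12500) (by linarith) (by linarith) (by linarith) (by norm_num)
        (lt_of_lt_of_le hla hla') (lt_of_le_of_lt hmb' hmb) (by norm_num) (by norm_num)
  · rcases le_or_gt p (17/40) with hpb | hpb
    · have hla := log_one_sub_lb (x := 231/400) (L := (-86177/100000)) (by norm_num) (by norm_num) 16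
        (by norm_num [Finset.sum_range_succ])
      have hla' : Real.log (1 - 231/400 : ℝ) ≤ Real.log p :=
        Real.log_le_log (by norm_num) (by linarith)
      have hmb := log_one_sub_ub (x := 169/400) (M := (-6863/12500)) (by norm_num) (by norm_num) 16
        (by norm_num [Finset.sum_range_succ])
      have hmb' : Real.log (1 - p) ≤ Real.log (1 - 169/400 : ℝ) :=
        Real.log_le_log (by linarith) (by linarith)
      exact step p (17/40) (-86177/100000) (-6863/12500) (by linarith) (by linarith) (by linarith) (by norm_num)
        (lt_of_lt_of_le hla hla') (lt_of_le_of_lt hmb' hmb) (by norm_num) (by norm_num)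
    · rcases le_or_gt p (43/100) with hpb | hpb
      · have hla := log_one_sub_lb (x := 23/40) (L := (-17117/20000)) (by norm_num) (by norm_num) 16
          (by norm_num [Finset.sum_range_succ])
        have hla' : Real.log (1 - 23/40 : ℝ) ≤ Real.log p :=
          Real.log_le_log (by norm_num) (by linarith)
        have hmb := log_one_sub_ub (x := 17/40) (M := (-27669/50000)) (by norm_num) (by norm_num) 16
          (by norm_num [Finset.sum_range_succ])
        have hmb' : Real.log (1 - p) ≤ Real.log (1 - 17/40 : ℝ) :=
          Real.log_le_log (by linarith) (by linarith)
        exact step p (43/100) (-17117/20000) (-27669/50000) (by linarith) (by linarith) (by linarith) (by norm_num)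
          (lt_of_lt_of_le hla hla') (lt_of_le_of_lt hmb' hmb) (by norm_num) (by norm_num)
      · rcases le_or_gt p (11/25) with hpb | hpb
        · have hla := log_one_sub_lb (x := 57/100) (L := (-84413/100000)) (by norm_num) (by norm_num) 16
            (by norm_num [Finset.sum_range_succ])
          have hla' : Real.log (1 - 57/100 : ℝ) ≤ Real.log p :=
            Real.log_le_log (by norm_num) (by linarith)
          have hmb := log_one_sub_ub (x := 43/100) (M := (-56211/100000)) (by norm_num) (by norm_num) 16
            (by norm_num [Finset.sum_range_succ])
          have hmb' : Real.log (1 - p) ≤ Real.log (1 - 43/100 : ℝ) :=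
            Real.log_le_log (by linarith) (by linarith)
          exact step p (11/25) (-84413/100000) (-56211/100000) (by linarith) (by linarith) (by linarith) (by norm_num)
            (lt_of_lt_of_le hla hla') (lt_of_le_of_lt hmb' hmb) (by norm_num) (by norm_num)
        · rcases le_or_gt p (9/20) with hpb | hpb
          · have hla := log_one_sub_lb (x := 14/25) (L := (-8211/10000)) (by norm_num) (by norm_num) 16
              (by norm_num [Finset.sum_range_succ])
            have hla' : Real.log (1 - 14/25 : ℝ) ≤ Real.log p :=
              Real.log_le_log (by norm_num) (by linarith)
            have hmb := log_one_sub_ub (x := 11/25) (M := (-57981/100000)) (by norm_num) (by norm_num) 16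
              (by norm_num [Finset.sum_range_succ])
            have hmb' : Real.log (1 - p) ≤ Real.log (1 - 11/25 : ℝ) :=
              Real.log_le_log (by linarith) (by linarith)
            exact step p (9/20) (-8211/10000) (-57981/100000) (by linarith) (by linarith) (by linarith) (by norm_num)
              (lt_of_lt_of_le hla hla') (lt_of_le_of_lt hmb' hmb) (by norm_num) (by norm_num)
          · rcases le_or_gt p (23/50) with hpb | hpb
            · have hla := log_one_sub_lb (x := 11/20) (L := (-79859/100000)) (by norm_num) (by norm_num) 16
                (by norm_num [Finset.sum_range_succ])
              have hla' : Real.log (1 - 11/20 : ℝ) ≤ Real.log p :=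
                Real.log_le_log (by norm_num) (by linarith)
              have hmb := log_one_sub_ub (x := 9/20) (M := (-59783/100000)) (by norm_num) (by norm_num) 16
                (by norm_num [Finset.sum_range_succ])
              have hmb' : Real.log (1 - p) ≤ Real.log (1 - 9/20 : ℝ) :=
                Real.log_le_log (by linarith) (by linarith)
              exact step p (23/50) (-79859/100000) (-59783/100000) (by linarith) (by linarith) (by linarith) (by norm_num)
                (lt_of_lt_of_le hla hla') (lt_of_le_of_lt hmb' hmb) (by norm_num) (by norm_num)
            · rcases le_or_gt p (47/100) with hpb | hpb
              · have hla := log_one_sub_lb (x := 27/50) (L := (-77659/100000)) (by norm_num) (by norm_num) 16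
                  (by norm_num [Finset.sum_range_succ])
                have hla' : Real.log (1 - 27/50 : ℝ) ≤ Real.log p :=
                  Real.log_le_log (by norm_num) (by linarith)
                have hmb := log_one_sub_ub (x := 23/50) (M := (-30809/50000)) (by norm_num) (by norm_num) 16
                  (by norm_num [Finset.sum_range_succ])
                have hmb' : Real.log (1 - p) ≤ Real.log (1 - 23/50 : ℝ) :=
                  Real.log_le_log (by linarith) (by linarith)
                exact step p (47/100) (-77659/100000) (-30809/50000) (by linarith) (by linarith) (by linarith) (by norm_num)
                  (lt_of_lt_of_le hla hla') (lt_of_le_of_lt hmb' hmb) (by norm_num) (by norm_num)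
              · rcases le_or_gt p (12/25) with hpb | hpb
                · have hla := log_one_sub_lb (x := 53/100) (L := (-75507/100000)) (by norm_num) (by norm_num) 16
                    (by norm_num [Finset.sum_range_succ])
                  have hla' : Real.log (1 - 53/100 : ℝ) ≤ Real.log p :=
                    Real.log_le_log (by norm_num) (by linarith)
                  have hmb := log_one_sub_ub (x := 47/100) (M := (-63487/100000)) (by norm_num) (by norm_num) 16
                    (by norm_num [Finset.sum_range_succ])
                  have hmb' : Real.log (1 - p) ≤ Real.log (1 - 47/100 : ℝ) :=
                    Real.log_le_log (by linarith) (by linarith)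
                  exact step p (12/25) (-75507/100000) (-63487/100000) (by linarith) (by linarith) (by linarith) (by norm_num)
                    (lt_of_lt_of_le hla hla') (lt_of_le_of_lt hmb' hmb) (by norm_num) (by norm_num)
                · rcases le_or_gt p (49/100) with hpb | hpb
                  · have hla := log_one_sub_lb (x := 13/25) (L := (-367/500)) (by norm_num) (by norm_num) 16
                      (by norm_num [Finset.sum_range_succ])
                    have hla' : Real.log (1 - 13/25 : ℝ) ≤ Real.log p :=
                      Real.log_le_log (by norm_num) (by linarith)
                    have hmb := log_one_sub_ub (x := 12/25) (M := (-65391/100000)) (by norm_num) (by norm_num) 16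
                      (by norm_num [Finset.sum_range_succ])
                    have hmb' : Real.log (1 - p) ≤ Real.log (1 - 12/25 : ℝ) :=
                      Real.log_le_log (by linarith) (by linarith)
                    exact step p (49/100) (-367/500) (-65391/100000) (by linarith) (by linarith) (by linarith) (by norm_num)
                      (lt_of_lt_of_le hla hla') (lt_of_le_of_lt hmb' hmb) (by norm_num) (by norm_num)
                  · have hla := log_one_sub_lb (x := 51/100) (L := (-35669/50000)) (by norm_num) (by norm_num) 16
                      (by norm_num [Finset.sum_range_succ])
                    have hla' : Real.log (1 - 51/100 : ℝ) ≤ Real.log p :=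
                      Real.log_le_log (by norm_num) (by linarith)
                    have hmb := log_one_sub_ub (x := 49/100) (M := (-67333/100000)) (by norm_num) (by norm_num) 16
                      (by norm_num [Finset.sum_range_succ])
                    have hmb' : Real.log (1 - p) ≤ Real.log (1 - 49/100 : ℝ) :=
                      Real.log_le_log (by linarith) (by linarith)
                    exact step p (1/2) (-35669/50000) (-67333/100000) (by linarith) (by linarith) (by linarith) (by norm_num)
                      (lt_of_lt_of_le hla hla') (lt_of_le_of_lt hmb' hmb) (by norm_num) (by norm_num)
end
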